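/- arXiv:1005.2358 — 3 statements merged into one kernel-verified Lean document; each statement's English description precedes it below -/
import Mathlib

section
/- For density matrices ρ, σ with σ positive definite, the squared trace distance is bounded by the Bures χ²-divergence: ‖ρ - σ‖₁² ≤ ⟨ρ - σ, Ω_Bures(ρ - σ)⟩, where Ω_Bures is the inverse of X ↦ (σX + Xσ)/2. -/
open Matrix
open scoped ComplexOrder

/-- The trace norm `‖A‖₁ = tr √(A†A)` of a complex matrix. -/
noncomputable def traceNorm {d : ℕ} (A : Matrix (Fin d) (Fin d) ℂ) : ℝ :=
  (((Matrix.posSemidef_conjTranspose_mul_self A).1.eigenvectorUnitary.1 *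
      diagonal (((↑) : ℝ → ℂ) ∘ Real.sqrt ∘ (Matrix.posSemidef_conjTranspose_mul_self A).1.eigenvalues) *
      (star (Matrix.posSemidef_conjTranspose_mul_self A).1.eigenvectorUnitary :
        Matrix (Fin d) (Fin d) ℂ)).trace).re

open scoped MatrixOrder ComplexStarModule

/-! Let `Δ = ρ - σ` and let `Z` be the Hermitian part of `Y`, which solves the same Lyapunov
equation `σZ + Zσ = 2Δ`. With `U` the sign of `Δ` (`U = Uᴴ`, `U² = 1`, `UΔ = |Δ|`), the numbers
`‖Δ‖₁ = Re tr(UΔ)`, `Re tr(ZΔ)` and `tr σ = 1` are the values `⟨U, Z⟩`, `⟨Z, Z⟩`, `⟨U, U⟩` of the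
semi-inner product `⟨X, W⟩ = Re tr(WσXᴴ)`, so the claim is Cauchy–Schwarz. -/

namespace Matrix

variable {𝕜 n : Type*} [RCLike 𝕜] [Fintype n]

theorem IsHermitian.exists_isHermitian_mul_self_eq_one_mul_eq_abs [DecidableEq n]
    {A : Matrix n n 𝕜} (hA : A.IsHermitian) :
    ∃ U : Matrix n n 𝕜, U.IsHermitian ∧ U * U = 1 ∧ U * A = CFC.abs A := by
  have hcont (f : ℝ → ℝ) : ContinuousOn f (spectrum ℝ A) := A.finite_real_spectrum.continuousOn f
  set s : ℝ → ℝ := fun x => if x < 0 then -1 else 1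
  refine ⟨cfc s A, cfc_predicate s A, ?_, ?_⟩
  · rw [← cfc_mul s s A (hcont s) (hcont s), ← cfc_one ℝ A]
    refine cfc_congr fun x _ => ?_
    simp only [s]
    split_ifs <;> norm_num
  · calc cfc s A * A = cfc s A * cfc id A := by rw [cfc_id ℝ A]
      _ = cfc (fun x => s x * id x) A := (cfc_mul s id A (hcont s) (hcont id)).symm
      _ = cfc (‖·‖) A := cfc_congr fun x _ => by
          simp only [s, id, Real.norm_eq_abs]
          split_ifs with hx
          · rw [abs_of_neg hx]; ring
          · rw [abs_of_nonneg (not_lt.mp hx)]; ring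
      _ = CFC.abs A := (CFC.abs_eq_cfc_norm A hA).symm

theorem re_trace_mul_mul_sq_le {M : Matrix n n 𝕜} (hM : M.PosSemidef) (X Y : Matrix n n 𝕜) :
    RCLike.re (Y * M * Xᴴ).trace ^ 2 ≤
      RCLike.re (X * M * Xᴴ).trace * RCLike.re (Y * M * Yᴴ).trace := by
  let := M.toMatrixSeminormedAddCommGroup hM
  let := M.toMatrixInnerProductSpace hM
  have hre : RCLike.re (inner 𝕜 X Y) ^ 2 ≤ ‖inner 𝕜 X Y‖ * ‖inner 𝕜 Y X‖ := by
    rw [norm_inner_symm Y X, ← sq, sq_le_sq, abs_norm]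
    exact RCLike.abs_re_le_norm (inner 𝕜 X Y)
  exact hre.trans (inner_mul_inner_self_le X Y)

theorem re_trace_mul_eq_of_lyapunov {M Z Δ X : Matrix n n 𝕜} (hM : M.IsHermitian)
    (hZ : Z.IsHermitian) (hX : X.IsHermitian) (h : M * Z + Z * M = (2 : 𝕜) • Δ) :
    RCLike.re (X * Δ).trace = RCLike.re (Z * M * X).trace := by
  have hconj : (X * M * Z).trace = star (Z * M * X).trace := by
    rw [← trace_conjTranspose, conjTranspose_mul, conjTranspose_mul, hX.eq, hM.eq, hZ.eq,
      mul_assoc]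
  have h2 : (2 : 𝕜) * (X * Δ).trace = star (Z * M * X).trace + (Z * M * X).trace := by
    rw [← smul_eq_mul, ← trace_smul, ← mul_smul_comm, ← h, mul_add, trace_add, ← mul_assoc,
      ← mul_assoc, hconj, trace_mul_cycle]
  have := congrArg RCLike.re h2
  simp only [RCLike.mul_re, RCLike.ofNat_re, RCLike.ofNat_im, zero_mul, sub_zero, RCLike.star_def,
    map_add, RCLike.conj_re] at this
  linarith

theorem mul_realPart_add_realPart_mul_eq {σ Y A : Matrix n n ℂ} (hσ : σ.IsHermitian)
    (hA : A.IsHermitian) (h : σ * Y + Y * σ = A) :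
    σ * (ℜ Y : Matrix n n ℂ) + (ℜ Y : Matrix n n ℂ) * σ = A := by
  have hstar : σ * star Y + star Y * σ = A := by
    rw [← hA.eq, ← h, conjTranspose_add, conjTranspose_mul, conjTranspose_mul, hσ.eq, add_comm]
    rfl
  rw [realPart_apply_coe, mul_smul_comm, smul_mul_assoc, ← smul_add, mul_add, add_mul,
    add_add_add_comm, h, hstar]
  module

theorem re_trace_realPart_mul {Y B : Matrix n n ℂ} (hB : B.IsHermitian) :
    ((ℜ Y : Matrix n n ℂ) * B).trace.re = (B * Y).trace.re := by
  have hstar : (star Y * B).trace.re = (B * Y).trace.re := by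
    rw [← hB.eq, star_eq_conjTranspose, ← conjTranspose_mul, trace_conjTranspose, hB.eq]
    rfl
  rw [realPart_apply_coe, smul_mul_assoc, trace_smul, Complex.smul_re, add_mul, trace_add,
    Complex.add_re, hstar, trace_mul_comm Y B, smul_eq_mul]
  ring

end Matrix

lemma traceNorm_eq_re_trace_abs {d : ℕ} (A : Matrix (Fin d) (Fin d) ℂ) :
    traceNorm A = (CFC.abs A).trace.re := by
  have hA := Matrix.posSemidef_conjTranspose_mul_self A
  rw [CFC.abs, star_eq_conjTranspose, CFC.sqrt_eq_real_sqrt _ hA.nonneg, cfcₙ_eq_cfc, hA.1.cfc_eq]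
  rfl

theorem traceNorm_sq_le_of_lyapunov {d : ℕ} {σ Δ Z : Matrix (Fin d) (Fin d) ℂ}
    (hσ : σ.PosSemidef) (hΔ : Δ.IsHermitian) (hZ : Z.IsHermitian)
    (h : σ * Z + Z * σ = (2 : ℂ) • Δ) :
    traceNorm Δ ^ 2 ≤ σ.trace.re * (Z * Δ).trace.re := by
  obtain ⟨U, hU, hUU, hUΔ⟩ := hΔ.exists_isHermitian_mul_self_eq_one_mul_eq_abs
  have hnorm : traceNorm Δ = (Z * σ * Uᴴ).trace.re := by
    rw [traceNorm_eq_re_trace_abs, ← hUΔ, hU.eq]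
    exact re_trace_mul_eq_of_lyapunov hσ.1 hZ hU h
  have hUσU : (U * σ * Uᴴ).trace = σ.trace := by
    rw [hU.eq, trace_mul_cycle, hUU, one_mul]
  have hZσZ : (Z * σ * Zᴴ).trace.re = (Z * Δ).trace.re := by
    rw [hZ.eq]
    exact (re_trace_mul_eq_of_lyapunov hσ.1 hZ hZ h).symm
  rw [hnorm, ← hUσU, ← hZσZ]
  exact re_trace_mul_mul_sq_le hσ U Z

theorem traceDist_sq_le_chi_sq_bures_general (d : ℕ) (ρ σ Y : Matrix (Fin d) (Fin d) ℂ)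
    (hρ : ρ.PosSemidef)
    (hσ : σ.PosDef) (hσtr : σ.trace = 1)
    (hY : σ * Y + Y * σ = (2 : ℂ) • (ρ - σ)) :
    traceNorm (ρ - σ) ^ 2 ≤ (((ρ - σ)ᴴ * Y).trace).re := by
  have hΔ : (ρ - σ).IsHermitian := hρ.1.sub hσ.1
  have hZ := mul_realPart_add_realPart_mul_eq hσ.1 ((IsSelfAdjoint.ofNat 2).smul hΔ) hY
  calc traceNorm (ρ - σ) ^ 2
      ≤ σ.trace.re * ((ℜ Y : Matrix (Fin d) (Fin d) ℂ) * (ρ - σ)).trace.re :=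
        traceNorm_sq_le_of_lyapunov hσ.posSemidef hΔ (ℜ Y).2 hZ
    _ = ((ρ - σ)ᴴ * Y).trace.re := by
        rw [hσtr, Complex.one_re, one_mul, hΔ.eq, re_trace_realPart_mul hΔ]

/-- For density matrices `ρ, σ` with `σ` positive definite, the squared
trace distance is bounded by the Bures χ²-divergence:
`‖ρ - σ‖₁² ≤ ⟨ρ - σ, Ω_Bures(ρ - σ)⟩`, where `Y = Ω_Bures(ρ - σ)` is the unique
solution of `σY + Yσ = 2(ρ - σ)`. -/
theorem traceDist_sq_le_chi_sq_bures (d : ℕ) (ρ σ Y : Matrix (Fin d) (Fin d) ℂ)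
    (hρ : ρ.PosSemidef) (hρtr : ρ.trace = 1)
    (hσ : σ.PosDef) (hσtr : σ.trace = 1)
    (hY : σ * Y + Y * σ = (2 : ℂ) • (ρ - σ)) :
    traceNorm (ρ - σ) ^ 2 ≤ (((ρ - σ)ᴴ * Y).trace).re :=
  traceDist_sq_le_chi_sq_bures_general d ρ σ Y hρ hσ hσtr hY
end

section
/- For a unital quantum channel T on M_d with symmetrization S = T*∘T, the spectral gap Δ = 1 - λ₁ (λ₁ the second largest eigenvalue of S) satisfies Δ ≤ 2h, where h = min over orthogonal projections Π with tr Π ≤ d/2 of tr[(𝟙-Π)S(Π)]/tr[Π] is the quantum Cheeger constant. -/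
open Matrix
open scoped ComplexOrder

/-- A completely positive trace-preserving map (quantum channel), presented by
a Kraus decomposition `T(X) = ∑ μ, K μ * X * (K μ)ᴴ` with `∑ μ, (K μ)ᴴ * K μ = 1`. -/
def IsCPTP {d : ℕ} (T : Matrix (Fin d) (Fin d) ℂ →ₗ[ℂ] Matrix (Fin d) (Fin d) ℂ) : Prop :=
  ∃ (m : ℕ) (K : Fin m → Matrix (Fin d) (Fin d) ℂ),
    (∀ X, T X = ∑ μ, K μ * X * (K μ)ᴴ) ∧ (∑ μ, (K μ)ᴴ * K μ = 1)

/-!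
Test the variational bound `tr[X S(X)] ≤ λ₁ tr[X²]` with the traceless part
`X = Π - (tr Π / d) 𝟙` of the projection. Because `T` is trace preserving, its adjoint is unital,
so `S = T* ∘ T` fixes `𝟙` and preserves the trace; hence `tr[X S(X)] = tr[Π S(Π)] - (tr Π)²/d` and
`tr[X²] = tr Π - (tr Π)²/d`. The flow `tr[(𝟙 - Π) S(Π)] = tr[T(𝟙 - Π) T(Π)]` is a trace of a product
of positive matrices, so it is nonnegative, and `tr Π ≤ d/2` makes `tr Π - (tr Π)²/d ≥ tr Π / 2`.
-/

open scoped MatrixOrder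

theorem Matrix.PosSemidef.trace_mul_nonneg {𝕜 n : Type*} [RCLike 𝕜] [Fintype n]
    {A B : Matrix n n 𝕜} (hA : A.PosSemidef) (hB : B.PosSemidef) : 0 ≤ (A * B).trace := by
  classical
  obtain ⟨C, rfl⟩ := CStarAlgebra.nonneg_iff_eq_star_mul_self.mp hB.nonneg
  rw [star_eq_conjTranspose, ← Matrix.mul_assoc, trace_mul_cycle]
  exact (hA.mul_mul_conjTranspose_same C).trace_nonneg

theorem IsStarProjection.trace_pos {𝕜 n : Type*} [RCLike 𝕜] [Fintype n] {P : Matrix n n 𝕜}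
    (hP : IsStarProjection P) (hne : P ≠ 0) : 0 < P.trace :=
  hP.nonneg.posSemidef.trace_nonneg.lt_of_ne
    (Ne.symm (hP.nonneg.posSemidef.trace_eq_zero_iff.not.mpr hne))

section TracelessPart

variable {𝕜 n : Type*} [Fintype n] [DecidableEq n]

def tracelessPart [Field 𝕜] (X : Matrix n n 𝕜) : Matrix n n 𝕜 :=
  X - (X.trace / Fintype.card n) • 1

theorem Matrix.IsHermitian.tracelessPart [RCLike 𝕜] {X : Matrix n n 𝕜} (hX : X.IsHermitian) :
    (tracelessPart X).IsHermitian := by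
  have htr : star X.trace = X.trace := by rw [← trace_conjTranspose, hX.eq]
  exact hX.sub (isHermitian_one.smul (by simp [IsSelfAdjoint, htr]))

variable [Nonempty n]

theorem trace_tracelessPart [Field 𝕜] [CharZero 𝕜] (X : Matrix n n 𝕜) :
    (tracelessPart X).trace = 0 := by
  have hn : (Fintype.card n : 𝕜) ≠ 0 := Nat.cast_ne_zero.mpr Fintype.card_ne_zero
  simp [tracelessPart, trace_sub, trace_smul, trace_one, hn]

theorem trace_tracelessPart_mul_map [Field 𝕜] [CharZero 𝕜] {S : Matrix n n 𝕜 →ₗ[𝕜] Matrix n n 𝕜}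
    (hS1 : S 1 = 1) (hStr : ∀ Y, (S Y).trace = Y.trace) (X : Matrix n n 𝕜) :
    (tracelessPart X * S (tracelessPart X)).trace =
      (X * S X).trace - X.trace ^ 2 / Fintype.card n := by
  have hn : (Fintype.card n : 𝕜) ≠ 0 := Nat.cast_ne_zero.mpr Fintype.card_ne_zero
  simp only [tracelessPart, map_sub, map_smul, hS1, sub_mul, mul_sub, Matrix.smul_mul,
    Matrix.mul_smul, mul_one, one_mul, trace_sub, trace_smul, trace_one, hStr, smul_eq_mul]
  field_simp
  ring

theorem trace_tracelessPart_mul_self [Field 𝕜] [CharZero 𝕜] (X : Matrix n n 𝕜) :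
    (tracelessPart X * tracelessPart X).trace = (X * X).trace - X.trace ^ 2 / Fintype.card n :=
  trace_tracelessPart_mul_map (S := LinearMap.id) rfl (fun _ => rfl) X

end TracelessPart

def IsHilbertSchmidtAdjoint {𝕜 n : Type*} [RCLike 𝕜] [Fintype n]
    (T Tadj : Matrix n n 𝕜 →ₗ[𝕜] Matrix n n 𝕜) : Prop :=
  ∀ X Y, ((T X)ᴴ * Y).trace = (Xᴴ * Tadj Y).trace

namespace IsHilbertSchmidtAdjoint

variable {𝕜 n : Type*} [RCLike 𝕜] [Fintype n] [DecidableEq n]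
  {T Tadj : Matrix n n 𝕜 →ₗ[𝕜] Matrix n n 𝕜}

theorem map_one (h : IsHilbertSchmidtAdjoint T Tadj) (hT : ∀ X, (T X).trace = X.trace) :
    Tadj 1 = 1 := by
  have horth : ∀ X, (Xᴴ * (Tadj 1 - 1)).trace = 0 := fun X => by
    rw [mul_sub, trace_sub, ← h, mul_one, mul_one, trace_conjTranspose, trace_conjTranspose,
      hT, sub_self]
  exact sub_eq_zero.mp (trace_conjTranspose_mul_self_eq_zero_iff.mp (horth _))

theorem trace_map (h : IsHilbertSchmidtAdjoint T Tadj) (hT1 : T 1 = 1) (Y : Matrix n n 𝕜) :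
    (Tadj Y).trace = Y.trace := by
  simpa [hT1] using (h 1 Y).symm

end IsHilbertSchmidtAdjoint

namespace IsCPTP

variable {d : ℕ} {T : Matrix (Fin d) (Fin d) ℂ →ₗ[ℂ] Matrix (Fin d) (Fin d) ℂ}

theorem trace_map (hT : IsCPTP T) (X : Matrix (Fin d) (Fin d) ℂ) : (T X).trace = X.trace := by
  obtain ⟨m, K, hK, hsum⟩ := hT
  calc (T X).trace = ((∑ μ, (K μ)ᴴ * K μ) * X).trace := by
        simp only [hK, trace_sum, Finset.sum_mul, Matrix.mul_assoc]
        exact Finset.sum_congr rfl fun μ _ => by rw [← Matrix.mul_assoc, trace_mul_comm]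
    _ = X.trace := by rw [hsum, one_mul]

theorem posSemidef_map (hT : IsCPTP T) {X : Matrix (Fin d) (Fin d) ℂ} (hX : X.PosSemidef) :
    (T X).PosSemidef := by
  obtain ⟨m, K, hK, -⟩ := hT
  rw [hK]
  exact posSemidef_sum _ fun μ _ => hX.mul_mul_conjTranspose_same (K μ)

theorem trace_mul_adjoint_map_nonneg (hT : IsCPTP T)
    {Tadj : Matrix (Fin d) (Fin d) ℂ →ₗ[ℂ] Matrix (Fin d) (Fin d) ℂ}
    (hadj : IsHilbertSchmidtAdjoint T Tadj) {X Y : Matrix (Fin d) (Fin d) ℂ}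
    (hX : X.PosSemidef) (hY : Y.PosSemidef) : 0 ≤ (X * Tadj (T Y)).trace := by
  rw [← hX.isHermitian.eq, ← hadj, (hT.posSemidef_map hX).isHermitian.eq]
  exact (hT.posSemidef_map hX).trace_mul_nonneg (hT.posSemidef_map hY)

end IsCPTP

theorem one_sub_le_two_mul_div_of_mul_le {l a b D : ℝ} (ha : 0 < a) (haD : a ≤ D / 2)
    (hb : 0 ≤ b) (h : (1 - l) * (a - a ^ 2 / D) ≤ b) : 1 - l ≤ 2 * (b / a) := by
  rcases le_or_gt (1 - l) 0 with hl | hl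
  · exact hl.trans (by positivity)
  · have hhalf : a ^ 2 / D ≤ a / 2 := by
      rw [div_le_iff₀ (by linarith)]
      nlinarith
    rw [mul_div_assoc', le_div_iff₀ ha]
    nlinarith

/-- Cheeger upper bound: For a unital quantum channel `T` on `M_d` with
symmetrization `S = T* ∘ T` and `l₁` the second largest eigenvalue of `S` (so that
`⟨X, S(X)⟩ ≤ l₁ ⟨X,X⟩` on the traceless Hermitian subspace, orthogonal to the top
eigenvector `𝟙`), the spectral gap `Δ = 1 - l₁` satisfies `Δ ≤ 2h`, where
`h` is the quantum Cheeger constant `min_Pr tr[(𝟙-Pr)S(Pr)]/tr[Pr]` over orthogonal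
projections with `tr Pr ≤ d/2`; i.e. the bound holds against every such projection. -/
theorem quantum_cheeger_upper_bound (d : ℕ) (hd : 0 < d)
    (T Tadj : Matrix (Fin d) (Fin d) ℂ →ₗ[ℂ] Matrix (Fin d) (Fin d) ℂ)
    (l₁ : ℝ)
    (hT : IsCPTP T) (hunital : T 1 = 1)
    (hadj : ∀ X Y, ((T X)ᴴ * Y).trace = (Xᴴ * Tadj Y).trace)
    (hl : ∀ X : Matrix (Fin d) (Fin d) ℂ, X.IsHermitian → X.trace = 0 →
      ((Xᴴ * Tadj (T X)).trace).re ≤ l₁ * ((Xᴴ * X).trace).re) :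
    ∀ Pr : Matrix (Fin d) (Fin d) ℂ, Pr * Pr = Pr → Prᴴ = Pr → Pr ≠ 0 →
      (Pr.trace).re ≤ (d : ℝ) / 2 →
      1 - l₁ ≤ 2 * ((((1 - Pr) * Tadj (T Pr)).trace).re / (Pr.trace).re) := by
  intro Pr hidem hherm hne htr
  have : Nonempty (Fin d) := ⟨⟨0, hd⟩⟩
  have hP : IsStarProjection Pr := ⟨hidem, hherm⟩
  have hTadj : IsHilbertSchmidtAdjoint T Tadj := hadj
  have hS1 : (Tadj ∘ₗ T) 1 = 1 := by
    rw [LinearMap.comp_apply, hunital, hTadj.map_one hT.trace_map]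
  have hStr (Y : Matrix (Fin d) (Fin d) ℂ) : ((Tadj ∘ₗ T) Y).trace = Y.trace :=
    (hTadj.trace_map hunital _).trans (hT.trace_map Y)
  have hvar : ((Pr * Tadj (T Pr)).trace - Pr.trace ^ 2 / d).re ≤
      l₁ * (Pr.trace - Pr.trace ^ 2 / d).re := by
    have hX := IsHermitian.tracelessPart hherm
    have hsym := trace_tracelessPart_mul_map hS1 hStr Pr
    rw [LinearMap.comp_apply, LinearMap.comp_apply] at hsym
    simpa only [hX.eq, hsym, trace_tracelessPart_mul_self, hidem, Fintype.card_fin] using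
      hl _ hX (trace_tracelessPart Pr)
  have hflow := hT.trace_mul_adjoint_map_nonneg hTadj hP.one_sub.nonneg.posSemidef
    hP.nonneg.posSemidef
  obtain ⟨hr, him⟩ := Complex.pos_iff.mp (hP.trace_pos hne)
  have hsq : (Pr.trace ^ 2 / d).re = Pr.trace.re ^ 2 / d := by
    obtain ⟨r, hrP⟩ : ∃ r : ℝ, Pr.trace = r := ⟨_, Complex.ext rfl (by simp [← him])⟩
    rw [hrP]
    norm_cast
  rw [Complex.sub_re, Complex.sub_re, hsq] at hvar
  refine one_sub_le_two_mul_div_of_mul_le hr htr (Complex.nonneg_iff.mp hflow).1 ?_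
  rw [Matrix.sub_mul, Matrix.one_mul, trace_sub, hTadj.trace_map hunital, hT.trace_map,
    Complex.sub_re]
  linarith
end

section
/- Monotonicity of the resolvent quadratic form under channels: for a quantum channel T, positive definite σ, ρ ∈ M_d, s > 0, and any A ∈ M_d: tr[A† (R_σ + s L_ρ)^{-1}(A)] ≥ tr[T(A)† (R_{T(σ)} + s L_{T(ρ)})^{-1}(T(A))], where L_X(Y)=XY, R_X(Y)=YX. -/
open Matrix
open scoped ComplexOrder

/-! With `Z = T*(Y)`, duality gives `⟨T(A), Y⟩ = ⟨A, Z⟩`, while the Kadison–Schwarz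
inequalities `Z†Z ≤ T*(Y†Y)` and `ZZ† ≤ T*(YY†)` show that the quadratic form
`q'(Y) = ⟨Y, (R_{T(σ)} + s L_{T(ρ)}) Y⟩ = ⟨T(A), Y⟩` dominates `q(Z) = ⟨Z, (R_σ + s L_ρ) Z⟩`.
Completing the square for the positive symmetric operator `R_σ + s L_ρ` then gives
`⟨A, X⟩ ≥ 2 Re⟨A, Z⟩ - q(Z) ≥ 2 Re⟨T(A), Y⟩ - q'(Y) = Re⟨T(A), Y⟩`. -/

open scoped MatrixOrder

namespace Matrix

section

variable {n : Type*} [Fintype n]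

lemma PosSemidef.re_trace_mul_nonneg {P Q : Matrix n n ℂ} (hP : P.PosSemidef)
    (hQ : Q.PosSemidef) : 0 ≤ (P * Q).trace.re := by
  classical
  obtain ⟨B, rfl⟩ := CStarAlgebra.nonneg_iff_eq_star_mul_self.mp hQ.nonneg
  rw [star_eq_conjTranspose, ← Matrix.mul_assoc, trace_mul_comm, ← Matrix.mul_assoc]
  exact (Complex.nonneg_iff.mp (hP.mul_mul_conjTranspose_same B).trace_nonneg).1

lemma re_trace_mul_le_of_le {P Q R : Matrix n n ℂ} (hPQ : P ≤ Q) (hR : R.PosSemidef) :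
    (P * R).trace.re ≤ (Q * R).trace.re := by
  have h := PosSemidef.re_trace_mul_nonneg (le_iff.mp hPQ) hR
  rwa [sub_mul, trace_sub, Complex.sub_re, sub_nonneg] at h

end

section

variable {m n ι : Type*} [Fintype ι]

def krausMap [Fintype m] (K : ι → Matrix n m ℂ) (X : Matrix m m ℂ) : Matrix n n ℂ :=
  ∑ i, K i * X * (K i)ᴴ

def krausDual [Fintype n] (K : ι → Matrix n m ℂ) (Y : Matrix n n ℂ) : Matrix m m ℂ :=
  ∑ i, (K i)ᴴ * Y * K i

variable (K : ι → Matrix n m ℂ)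

lemma conjTranspose_krausMap [Fintype m] (X : Matrix m m ℂ) :
    (krausMap K X)ᴴ = krausMap K Xᴴ := by
  simp [krausMap, conjTranspose_sum, Matrix.mul_assoc]

lemma conjTranspose_krausDual [Fintype n] (Y : Matrix n n ℂ) :
    (krausDual K Y)ᴴ = krausDual K Yᴴ := by
  simp [krausDual, conjTranspose_sum, Matrix.mul_assoc]

lemma IsHermitian.krausMap [Fintype m] {X : Matrix m m ℂ} (hX : X.IsHermitian) :
    (Matrix.krausMap K X).IsHermitian := by
  rw [IsHermitian, conjTranspose_krausMap, hX.eq]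

variable [Fintype m] [Fintype n]

lemma trace_mul_krausMap (Y : Matrix n n ℂ) (X : Matrix m m ℂ) :
    (Y * krausMap K X).trace = (krausDual K Y * X).trace := by
  simp only [krausMap, krausDual, Finset.mul_sum, Finset.sum_mul, trace_sum]
  refine Finset.sum_congr rfl fun i _ => ?_
  rw [← Matrix.mul_assoc, trace_mul_comm, ← Matrix.mul_assoc, ← Matrix.mul_assoc]

lemma trace_conjTranspose_krausMap_mul (X : Matrix m m ℂ) (Y : Matrix n n ℂ) :
    ((krausMap K X)ᴴ * Y).trace = (Xᴴ * krausDual K Y).trace := by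
  rw [conjTranspose_krausMap, trace_mul_comm, trace_mul_krausMap, trace_mul_comm]

/-- The Kadison–Schwarz inequality for the unital map `krausDual K`. -/
lemma conjTranspose_krausDual_mul_self_le [DecidableEq m] (hK : ∑ i, (K i)ᴴ * K i = 1)
    (Y : Matrix n n ℂ) : (krausDual K Y)ᴴ * krausDual K Y ≤ krausDual K (Yᴴ * Y) := by
  set Z := krausDual K Y
  have hZ' : Zᴴ = ∑ i, (K i)ᴴ * Yᴴ * K i := conjTranspose_krausDual K Y
  have hsq : krausDual K (Yᴴ * Y) - Zᴴ * Z =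
      ∑ i, (Y * K i - K i * Z)ᴴ * (Y * K i - K i * Z) := by
    have hexpand : ∀ i, (Y * K i - K i * Z)ᴴ * (Y * K i - K i * Z) =
        (K i)ᴴ * (Yᴴ * Y) * K i - (K i)ᴴ * Yᴴ * K i * Z - Zᴴ * ((K i)ᴴ * Y * K i)
          + Zᴴ * ((K i)ᴴ * K i) * Z := by
      intro i
      simp only [conjTranspose_sub, conjTranspose_mul, Matrix.sub_mul, Matrix.mul_sub,
        Matrix.mul_assoc]
      abel
    simp only [hexpand, Finset.sum_add_distrib, Finset.sum_sub_distrib, ← Finset.sum_mul,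
      ← Finset.mul_sum, hK, ← hZ', Matrix.mul_one]
    rw [show ∑ i, (K i)ᴴ * (Yᴴ * Y) * K i = krausDual K (Yᴴ * Y) from rfl,
      show ∑ i, (K i)ᴴ * Y * K i = Z from rfl]
    abel
  rw [← sub_nonneg, hsq]
  exact Finset.sum_nonneg fun i _ => (posSemidef_conjTranspose_mul_self _).nonneg

end

section

variable {n : Type*} [Fintype n]

/-- The superoperator `R_σ + s L_ρ`. -/
def sylvesterMap (σ ρ : Matrix n n ℂ) (s : ℝ) : Matrix n n ℂ →ₗ[ℂ] Matrix n n ℂ :=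
  LinearMap.mulRight ℂ σ + (s : ℂ) • LinearMap.mulLeft ℂ ρ

lemma sylvesterMap_apply (σ ρ : Matrix n n ℂ) (s : ℝ) (X : Matrix n n ℂ) :
    sylvesterMap σ ρ s X = X * σ + (s : ℂ) • (ρ * X) :=
  rfl

lemma trace_conjTranspose_sylvesterMap_mul {σ ρ : Matrix n n ℂ} (hσ : σ.IsHermitian)
    (hρ : ρ.IsHermitian) (s : ℝ) (X Z : Matrix n n ℂ) :
    ((sylvesterMap σ ρ s X)ᴴ * Z).trace = (Xᴴ * sylvesterMap σ ρ s Z).trace := by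
  simp only [sylvesterMap_apply, conjTranspose_add, conjTranspose_smul, conjTranspose_mul,
    hσ.eq, hρ.eq, Complex.star_def, Complex.conj_ofReal, add_mul, mul_add, smul_mul_assoc,
    mul_smul_comm, trace_add, trace_smul, Matrix.mul_assoc]
  rw [trace_mul_comm σ, Matrix.mul_assoc]

lemma re_trace_conjTranspose_mul_sylvesterMap (σ ρ : Matrix n n ℂ) (s : ℝ) (X : Matrix n n ℂ) :
    (Xᴴ * sylvesterMap σ ρ s X).trace.re =
      (Xᴴ * X * σ).trace.re + s * (X * Xᴴ * ρ).trace.re := by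
  rw [sylvesterMap_apply, mul_add, mul_smul_comm, trace_add, trace_smul, smul_eq_mul,
    Complex.add_re, Complex.re_ofReal_mul, ← Matrix.mul_assoc, ← Matrix.mul_assoc,
    trace_mul_comm (Xᴴ * ρ), Matrix.mul_assoc X]

lemma re_trace_conjTranspose_mul_sylvesterMap_nonneg {σ ρ : Matrix n n ℂ} (hσ : σ.PosSemidef)
    (hρ : ρ.PosSemidef) {s : ℝ} (hs : 0 ≤ s) (X : Matrix n n ℂ) :
    0 ≤ (Xᴴ * sylvesterMap σ ρ s X).trace.re := by
  rw [re_trace_conjTranspose_mul_sylvesterMap]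
  have hσX := (posSemidef_conjTranspose_mul_self X).re_trace_mul_nonneg hσ
  have hρX := (posSemidef_self_mul_conjTranspose X).re_trace_mul_nonneg hρ
  positivity

/-- Completing the square: for `A = Ω X`, the functional `Z ↦ 2 Re⟨A, Z⟩ - ⟨Z, Ω Z⟩` is
maximised at `Z = X`. -/
lemma two_mul_re_trace_sub_le {Ω : Matrix n n ℂ →ₗ[ℂ] Matrix n n ℂ}
    (hsymm : ∀ X Z, ((Ω X)ᴴ * Z).trace = (Xᴴ * Ω Z).trace)
    (hpos : ∀ W, 0 ≤ (Wᴴ * Ω W).trace.re) (X Z : Matrix n n ℂ) :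
    2 * ((Ω X)ᴴ * Z).trace.re - (Zᴴ * Ω Z).trace.re ≤ (Xᴴ * Ω X).trace.re := by
  have hcross : (Zᴴ * Ω X).trace.re = ((Ω X)ᴴ * Z).trace.re := by
    rw [← Complex.conj_re, ← Complex.star_def, ← trace_conjTranspose, conjTranspose_mul,
      conjTranspose_conjTranspose]
  have h := hpos (X - Z)
  simp only [map_sub, conjTranspose_sub, sub_mul, mul_sub, trace_sub, Complex.sub_re,
    ← hsymm X Z, hcross] at h
  linarith

end

section

variable {m n ι : Type*} [Fintype m] [Fintype n] [Fintype ι]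

lemma re_trace_sylvesterMap_krausDual_le [DecidableEq m] (K : ι → Matrix n m ℂ)
    (hK : ∑ i, (K i)ᴴ * K i = 1) {σ ρ : Matrix m m ℂ} (hσ : σ.PosSemidef) (hρ : ρ.PosSemidef)
    {s : ℝ} (hs : 0 ≤ s) (Y : Matrix n n ℂ) :
    ((krausDual K Y)ᴴ * sylvesterMap σ ρ s (krausDual K Y)).trace.re ≤
      (Yᴴ * sylvesterMap (krausMap K σ) (krausMap K ρ) s Y).trace.re := by
  simp only [re_trace_conjTranspose_mul_sylvesterMap, trace_mul_krausMap]
  have hσY := re_trace_mul_le_of_le (conjTranspose_krausDual_mul_self_le K hK Y) hσ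
  have hρY := re_trace_mul_le_of_le (conjTranspose_krausDual_mul_self_le K hK Yᴴ) hρ
  rw [conjTranspose_conjTranspose, ← conjTranspose_krausDual, conjTranspose_conjTranspose] at hρY
  gcongr

end

end Matrix

/-- monotonicity of the resolvent quadratic form: for a quantum channel
`T`, positive definite `σ, ρ`, `s > 0`, and any `A`: if `X = (R_σ + s L_ρ)⁻¹(A)`
(i.e. `Xσ + sρX = A`) and `Y = (R_{T(σ)} + s L_{T(ρ)})⁻¹(T(A))`
(i.e. `Y·T(σ) + s·T(ρ)·Y = T(A)`), then
`tr[A† (R_σ + sL_ρ)⁻¹(A)] ≥ tr[T(A)† (R_{T(σ)} + sL_{T(ρ)})⁻¹(T(A))]`. -/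
theorem resolvent_quadratic_form_monotone (d : ℕ)
    (T : Matrix (Fin d) (Fin d) ℂ →ₗ[ℂ] Matrix (Fin d) (Fin d) ℂ)
    (σ ρ : Matrix (Fin d) (Fin d) ℂ) (s : ℝ)
    (hT : IsCPTP T) (hσ : σ.PosDef) (hρ : ρ.PosDef) (hs : 0 < s) :
    ∀ A X Y : Matrix (Fin d) (Fin d) ℂ,
      X * σ + (s : ℂ) • (ρ * X) = A →
      Y * (T σ) + (s : ℂ) • ((T ρ) * Y) = T A →
      (((T A)ᴴ * Y).trace).re ≤ ((Aᴴ * X).trace).re := by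
  obtain ⟨m, K, hTK, hK⟩ := hT
  intro A X Y hX hY
  rw [show ⇑T = krausMap K from funext hTK] at hY ⊢
  rw [← sylvesterMap_apply] at hX hY
  subst hX
  have hsymm := trace_conjTranspose_sylvesterMap_mul hσ.isHermitian hρ.isHermitian s
  have hsymmT := trace_conjTranspose_sylvesterMap_mul (hσ.isHermitian.krausMap K)
    (hρ.isHermitian.krausMap K) s
  set Z := krausDual K Y
  calc ((krausMap K (sylvesterMap σ ρ s X))ᴴ * Y).trace.re
      = 2 * ((sylvesterMap σ ρ s X)ᴴ * Z).trace.re -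
          (Yᴴ * sylvesterMap (krausMap K σ) (krausMap K ρ) s Y).trace.re := by
        rw [← hsymmT Y Y, hY, trace_conjTranspose_krausMap_mul]
        ring
    _ ≤ 2 * ((sylvesterMap σ ρ s X)ᴴ * Z).trace.re -
          (Zᴴ * sylvesterMap σ ρ s Z).trace.re :=
        sub_le_sub_left
          (re_trace_sylvesterMap_krausDual_le K hK hσ.posSemidef hρ.posSemidef hs.le Y) _
    _ ≤ (Xᴴ * sylvesterMap σ ρ s X).trace.re := two_mul_re_trace_sub_le hsymm
          (re_trace_conjTranspose_mul_sylvesterMap_nonneg hσ.posSemidef hρ.posSemidef hs.le) X Z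
    _ = ((sylvesterMap σ ρ s X)ᴴ * X).trace.re := by rw [hsymm]
end
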